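/- arXiv:2207.08921 — 2 statements merged into one kernel-verified Lean document; each statement's English description precedes it below -/
import Mathlib

section
/- For every holomorphic function ψ on the unit disk with ψ mapping into the closed unit disk (i.e., sup norm at most 1), one has sup over z in the disk of 2(1-|z|²)|ψ(z)||ψ'(z)| ≤ 4/(3√3) < 1. -/
/-!
By the Schwarz–Pick lemma, `(1 - |z|²) |ψ'(z)| ≤ 1 - |ψ(z)|²`, so with `s = |ψ(z)| ∈ [0, 1]` the
quantity `2 (1 - |z|²) |ψ(z)| |ψ'(z)|` is at most `2 s (1 - s²)`, whose maximum on `[0, 1]` is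
attained at `s = 1/√3` and equals `4 / (3√3)`.
-/

open Metric Filter

/-- The open unit disk in ℂ. -/
noncomputable def unitDisk : Set ℂ := Metric.ball 0 1

/-- Supremum norm over the unit disk. -/
noncomputable def supNorm (f : ℂ → ℂ) : ℝ :=
  sSup ((fun z => ‖f z‖) '' unitDisk)

/-- Bloch seminorm over the unit disk. -/
noncomputable def blochSemi (g : ℂ → ℂ) : ℝ :=
  sSup ((fun z => (1 - ‖z‖ ^ 2) * ‖deriv g z‖) '' unitDisk)

/-- Bloch norm over the unit disk. -/
noncomputable def blochNorm (g : ℂ → ℂ) : ℝ :=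
  ‖g 0‖ + blochSemi g

open Set Topology ComplexConjugate

namespace Complex

noncomputable def mobius (a z : ℂ) : ℂ := (z + a) / (1 + conj a * z)

variable {a z : ℂ}

lemma one_add_conj_mul_ne_zero (ha : ‖a‖ < 1) (hz : ‖z‖ < 1) : 1 + conj a * z ≠ 0 := by
  intro h
  have hnorm : ‖conj a * z‖ < 1 := by
    rw [norm_mul, norm_conj]
    nlinarith [norm_nonneg a, norm_nonneg z]
  rw [eq_neg_of_add_eq_zero_right h, norm_neg, norm_one] at hnorm
  exact hnorm.false

lemma mobius_zero (a : ℂ) : mobius a 0 = a := by simp [mobius]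

lemma mobius_neg_self (a : ℂ) : mobius (-a) a = 0 := by simp [mobius]

lemma norm_mobius_lt_one (ha : ‖a‖ < 1) (hz : ‖z‖ < 1) : ‖mobius a z‖ < 1 := by
  have hden := one_add_conj_mul_ne_zero ha hz
  have key : ‖z + a‖ ^ 2 < ‖1 + conj a * z‖ ^ 2 := by
    have hid : ‖1 + conj a * z‖ ^ 2 - ‖z + a‖ ^ 2 = (1 - ‖a‖ ^ 2) * (1 - ‖z‖ ^ 2) := by
      simp only [← normSq_eq_norm_sq, normSq_apply, add_re, add_im, mul_re, mul_im, conj_re,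
        conj_im, one_re, one_im]
      ring
    have : 0 < (1 - ‖a‖ ^ 2) * (1 - ‖z‖ ^ 2) := by
      apply mul_pos <;> nlinarith [norm_nonneg a, norm_nonneg z]
    linarith
  rw [mobius, norm_div, div_lt_one (norm_pos_iff.mpr hden)]
  exact lt_of_pow_lt_pow_left₀ 2 (norm_nonneg _) key

lemma mapsTo_mobius (ha : ‖a‖ < 1) : MapsTo (mobius a) (ball 0 1) (ball 0 1) := fun z hz => by
  rw [mem_ball_zero_iff] at hz ⊢
  exact norm_mobius_lt_one ha hz

lemma hasDerivAt_mobius (ha : ‖a‖ < 1) (hz : ‖z‖ < 1) :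
    HasDerivAt (mobius a) (((1 - ‖a‖ ^ 2 : ℝ) : ℂ) / (1 + conj a * z) ^ 2) z := by
  have hden := one_add_conj_mul_ne_zero ha hz
  refine (((hasDerivAt_id z).add_const a).div
    (((hasDerivAt_id z).const_mul (conj a)).const_add 1) hden).congr_deriv ?_
  push_cast
  rw [← conj_mul']
  simp only [id_eq]
  ring

lemma hasDerivAt_mobius_zero (ha : ‖a‖ < 1) :
    HasDerivAt (mobius a) ((1 - ‖a‖ ^ 2 : ℝ) : ℂ) 0 := by
  simpa using hasDerivAt_mobius ha (z := 0) (by simp)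

lemma hasDerivAt_mobius_neg_self (ha : ‖a‖ < 1) :
    HasDerivAt (mobius (-a)) ((1 - ‖a‖ ^ 2 : ℝ) : ℂ)⁻¹ a := by
  have h := hasDerivAt_mobius (a := -a) (by simpa using ha) ha
  have hden : 1 + conj (-a) * a = ((1 - ‖a‖ ^ 2 : ℝ) : ℂ) := by
    push_cast
    rw [map_neg, neg_mul, conj_mul']
    ring
  rw [hden, norm_neg] at h
  refine h.congr_deriv ?_
  field_simp

variable {g : ℂ → ℂ}

/-- Conjugating `g` by Möbius maps gives a self-map of the disk fixing `0`, to which the Schwarz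
lemma applies. -/
theorem schwarz_pick_of_mapsTo_ball (hd : DifferentiableOn ℂ g (ball 0 1))
    (hg : MapsTo g (ball 0 1) (ball 0 1)) (ha : a ∈ ball 0 1) :
    (1 - ‖a‖ ^ 2) * ‖deriv g a‖ ≤ 1 - ‖g a‖ ^ 2 := by
  have ha' : ‖a‖ < 1 := mem_ball_zero_iff.mp ha
  have hb : ‖g a‖ < 1 := mem_ball_zero_iff.mp (hg ha)
  set h : ℂ → ℂ := mobius (-g a) ∘ g ∘ mobius a
  have hmaps : MapsTo h (ball 0 1) (closedBall (h 0) 1) := by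
    have h0 : h 0 = 0 := by simp [h, mobius_zero, mobius_neg_self]
    rw [h0]
    exact ((mapsTo_mobius (by simpa using hb)).comp (hg.comp (mapsTo_mobius ha'))).mono_right
      ball_subset_closedBall
  have hdh : DifferentiableOn ℂ h (ball 0 1) := fun z hz =>
    have hz' : ‖z‖ < 1 := mem_ball_zero_iff.mp hz
    have hgz : ‖g (mobius a z)‖ < 1 := mem_ball_zero_iff.mp (hg (mapsTo_mobius ha' hz))
    ((hasDerivAt_mobius (by simpa using hb) hgz).differentiableAt.comp z
      ((hd.differentiableAt (isOpen_ball.mem_nhds (mapsTo_mobius ha' hz))).comp z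
        (hasDerivAt_mobius ha' hz').differentiableAt)).differentiableWithinAt
  have hderiv : HasDerivAt h
      (((1 - ‖g a‖ ^ 2 : ℝ) : ℂ)⁻¹ * (deriv g a * ((1 - ‖a‖ ^ 2 : ℝ) : ℂ))) 0 := by
    have hga : HasDerivAt g (deriv g a) (mobius a 0) := by
      rw [mobius_zero]
      exact (hd.differentiableAt (isOpen_ball.mem_nhds ha)).hasDerivAt
    have hm : HasDerivAt (mobius (-g a)) ((1 - ‖g a‖ ^ 2 : ℝ) : ℂ)⁻¹ (g (mobius a 0)) := by
      rw [mobius_zero]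
      exact hasDerivAt_mobius_neg_self hb
    exact hm.comp 0 (hga.comp 0 (hasDerivAt_mobius_zero ha'))
  have hschwarz : ‖deriv h 0‖ ≤ 1 := norm_deriv_le_one_of_mapsTo_ball hdh hmaps one_pos
  have hpa : 0 < 1 - ‖a‖ ^ 2 := by nlinarith [norm_nonneg a]
  have hpb : 0 < 1 - ‖g a‖ ^ 2 := by nlinarith [norm_nonneg (g a)]
  rw [hderiv.deriv, norm_mul, norm_mul, norm_inv, norm_real, norm_real, Real.norm_of_nonneg hpa.le,
    Real.norm_of_nonneg hpb.le, inv_mul_le_iff₀ hpb] at hschwarz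
  linarith

/-- The open case applied to `t • g`, letting `t → 1⁻`. -/
theorem schwarz_pick (hd : DifferentiableOn ℂ g (ball 0 1))
    (hg : MapsTo g (ball 0 1) (closedBall 0 1)) (ha : a ∈ ball 0 1) :
    (1 - ‖a‖ ^ 2) * ‖deriv g a‖ ≤ 1 - ‖g a‖ ^ 2 := by
  have hscaled : ∀ t ∈ Ioo (0 : ℝ) 1,
      (1 - ‖a‖ ^ 2) * (t * ‖deriv g a‖) ≤ 1 - (t * ‖g a‖) ^ 2 := by
    rintro t ⟨ht0, ht1⟩
    have hmaps : MapsTo (fun z => (t : ℂ) * g z) (ball 0 1) (ball 0 1) := fun z hz => by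
      have hgz := mem_closedBall_zero_iff.mp (hg hz)
      rw [mem_ball_zero_iff, norm_mul, norm_real, Real.norm_of_nonneg ht0.le]
      nlinarith [norm_nonneg (g z)]
    have h := schwarz_pick_of_mapsTo_ball (hd.const_mul (t : ℂ)) hmaps ha
    rwa [deriv_const_mul _ (hd.differentiableAt (isOpen_ball.mem_nhds ha)), norm_mul, norm_mul,
      norm_real, Real.norm_of_nonneg ht0.le] at h
  have hlim : Tendsto (fun t : ℝ => 1 - (t * ‖g a‖) ^ 2 - (1 - ‖a‖ ^ 2) * (t * ‖deriv g a‖))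
      (𝓝[<] 1) (𝓝 (1 - ‖g a‖ ^ 2 - (1 - ‖a‖ ^ 2) * ‖deriv g a‖)) := by
    have hcont : Continuous fun t : ℝ =>
        1 - (t * ‖g a‖) ^ 2 - (1 - ‖a‖ ^ 2) * (t * ‖deriv g a‖) := by fun_prop
    simpa using (hcont.tendsto 1).mono_left nhdsWithin_le_nhds
  have := ge_of_tendsto hlim (mem_of_superset (Ioo_mem_nhdsLT one_pos) fun t ht =>
    sub_nonneg.mpr (hscaled t ht))
  linarith

end Complex

lemma two_mul_mul_one_sub_sq_le {s : ℝ} (hs : 0 ≤ s) :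
    2 * s * (1 - s ^ 2) ≤ 4 / (3 * √3) := by
  have h3 : √3 ^ 2 = 3 := Real.sq_sqrt (by norm_num)
  rw [le_div_iff₀ (by positivity)]
  have hfactor : 4 - 2 * s * (1 - s ^ 2) * (3 * √3) = 2 * (√3 * s - 1) ^ 2 * (√3 * s + 2) := by
    linear_combination (-2 * √3 * s ^ 3) * h3
  have : 0 ≤ 2 * (√3 * s - 1) ^ 2 * (√3 * s + 2) := by positivity
  linarith

lemma four_div_three_mul_sqrt_three_lt_one : 4 / (3 * √3) < 1 := by
  have h3 : √3 ^ 2 = 3 := Real.sq_sqrt (by norm_num)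
  rw [div_lt_one (by positivity)]
  nlinarith [Real.sqrt_nonneg 3]

theorem stmt_0 (ψ : ℂ → ℂ) (hψ : DifferentiableOn ℂ ψ unitDisk)
    (hb : ∀ z ∈ unitDisk, ‖ψ z‖ ≤ 1) :
    (∀ z ∈ unitDisk,
      2 * (1 - ‖z‖ ^ 2) * ‖ψ z‖ * ‖deriv ψ z‖
        ≤ 4 / (3 * Real.sqrt 3)) ∧ 4 / (3 * Real.sqrt 3) < 1 := by
  refine ⟨fun z hz => ?_, four_div_three_mul_sqrt_three_lt_one⟩
  have hpick := Complex.schwarz_pick hψ (fun w hw => mem_closedBall_zero_iff.mpr (hb w hw)) hz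
  calc 2 * (1 - ‖z‖ ^ 2) * ‖ψ z‖ * ‖deriv ψ z‖
      = 2 * ‖ψ z‖ * ((1 - ‖z‖ ^ 2) * ‖deriv ψ z‖) := by ring
    _ ≤ 2 * ‖ψ z‖ * (1 - ‖ψ z‖ ^ 2) := by gcongr
    _ ≤ 4 / (3 * √3) := two_mul_mul_one_sub_sq_le (norm_nonneg _)
end

section
/- If ψ is holomorphic on 𝔻 and the multiplication operator M_ψ : H^∞(𝔻) → 𝓑(𝔻), f ↦ ψf, is an isometry (with respect to ‖f‖_∞ on H^∞ and ‖g‖_𝓑 = |g(0)| + sup_z (1-|z|²)|g'(z)| on the Bloch space), then ψ(0) ≠ 0. -/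
open Metric Filter

/-!
If `ψ 0 = 0`, the isometry identity reads `β (ψ f) = ‖f‖_∞`. Testing it on the disk automorphism
`φ_a z = (a - z) / (1 - ā z)`, for which `(1 - |a|²) |(ψ φ_a)'(a)| = |ψ a|` and `‖φ_a‖_∞ ≤ 1`, gives
`m := ‖ψ‖_∞ ≤ 1`, and `m > 0` since `β ψ = ‖1‖_∞ = 1`. Testing it on `f = ψ` gives `m = β (ψ²)`,
while the Schwarz–Pick bound `(1 - |z|²) |ψ'(z)| ≤ (m² - |ψ z|²) / m` yields
`β (ψ²) ≤ sup_t 2 t (m² - t²) / m < 4 m² / 5`. Hence `m ≥ 5 / 4`, a contradiction.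
-/

open Set Topology ComplexConjugate

noncomputable def diskMobius (a z : ℂ) : ℂ := (a - z) / (1 - conj a * z)

lemma norm_one_sub_conj_mul_sq_sub_norm_sub_sq (a z : ℂ) :
    ‖1 - conj a * z‖ ^ 2 - ‖a - z‖ ^ 2 = (1 - ‖a‖ ^ 2) * (1 - ‖z‖ ^ 2) := by
  simp only [Complex.sq_norm, Complex.normSq_apply, Complex.sub_re, Complex.sub_im,
    Complex.mul_re, Complex.mul_im, Complex.conj_re, Complex.conj_im, Complex.one_re,
    Complex.one_im]
  ring

section diskMobius

variable {a z : ℂ}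

lemma one_sub_conj_mul_ne_zero (ha : ‖a‖ < 1) (hz : ‖z‖ ≤ 1) : 1 - conj a * z ≠ 0 := by
  refine sub_ne_zero.mpr fun h => ?_
  have h1 : ‖conj a * z‖ = 1 := by rw [← h, norm_one]
  rw [norm_mul, RCLike.norm_conj] at h1
  nlinarith [norm_nonneg a, norm_nonneg z]

lemma norm_diskMobius_lt_one (ha : ‖a‖ < 1) (hz : ‖z‖ < 1) : ‖diskMobius a z‖ < 1 := by
  have hden := one_sub_conj_mul_ne_zero ha hz.le
  rw [diskMobius, norm_div, div_lt_one (norm_pos_iff.mpr hden)]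
  refine lt_of_pow_lt_pow_left₀ 2 (norm_nonneg _) ?_
  have := norm_one_sub_conj_mul_sq_sub_norm_sub_sq a z
  have : 0 < (1 - ‖a‖ ^ 2) * (1 - ‖z‖ ^ 2) := by
    apply mul_pos <;> nlinarith [norm_nonneg a, norm_nonneg z]
  linarith

lemma mapsTo_diskMobius (ha : ‖a‖ < 1) : MapsTo (diskMobius a) (ball 0 1) (ball 0 1) :=
  fun _ hz => mem_ball_zero_iff.mpr <| norm_diskMobius_lt_one ha (mem_ball_zero_iff.mp hz)

@[simp] lemma diskMobius_zero : diskMobius a 0 = a := by simp [diskMobius]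

@[simp] lemma diskMobius_self : diskMobius a a = 0 := by simp [diskMobius]

lemma hasDerivAt_diskMobius (h : 1 - conj a * z ≠ 0) :
    HasDerivAt (diskMobius a) ((conj a * a - 1) / (1 - conj a * z) ^ 2) z := by
  refine (((hasDerivAt_id' z).const_sub a).fun_div
    (((hasDerivAt_id' z).const_mul (conj a)).const_sub 1) h).congr_deriv ?_
  ring

lemma differentiableOn_diskMobius (ha : ‖a‖ < 1) : DifferentiableOn ℂ (diskMobius a) (ball 0 1) :=
  fun _ hz => (hasDerivAt_diskMobius (one_sub_conj_mul_ne_zero ha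
    (mem_ball_zero_iff.mp hz).le)).differentiableAt.differentiableWithinAt

lemma norm_deriv_diskMobius_zero (ha : ‖a‖ < 1) : ‖deriv (diskMobius a) 0‖ = 1 - ‖a‖ ^ 2 := by
  rw [(hasDerivAt_diskMobius (by simp)).deriv, Complex.conj_mul']
  simp only [mul_zero, sub_zero, one_pow, div_one]
  rw [← norm_neg, neg_sub]
  norm_cast
  rw [Real.norm_of_nonneg (by nlinarith [norm_nonneg a])]

lemma norm_deriv_diskMobius_self (ha : ‖a‖ < 1) :
    (1 - ‖a‖ ^ 2) * ‖deriv (diskMobius a) a‖ = 1 := by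
  have hpos : 0 < 1 - ‖a‖ ^ 2 := by nlinarith [norm_nonneg a]
  rw [(hasDerivAt_diskMobius (one_sub_conj_mul_ne_zero ha ha.le)).deriv, Complex.conj_mul']
  norm_cast
  rw [Real.norm_eq_abs, show ‖a‖ ^ 2 - 1 = -(1 - ‖a‖ ^ 2) by ring, neg_div, abs_neg, abs_div,
    abs_of_pos hpos, abs_of_pos (by positivity)]
  field_simp

lemma mul_one_sub_sq_norm_deriv_mul_diskMobius_self {ψ : ℂ → ℂ}
    (hψ : DifferentiableAt ℂ ψ a) (ha : ‖a‖ < 1) :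
    (1 - ‖a‖ ^ 2) * ‖deriv (fun z => ψ z * diskMobius a z) a‖ = ‖ψ a‖ := by
  have hφ := hasDerivAt_diskMobius (one_sub_conj_mul_ne_zero ha ha.le)
  rw [deriv_fun_mul hψ hφ.differentiableAt, diskMobius_self, mul_zero, zero_add, norm_mul,
    mul_left_comm, norm_deriv_diskMobius_self ha, mul_one]

end diskMobius

theorem schwarz_pick {g : ℂ → ℂ} (hg : DifferentiableOn ℂ g (ball 0 1))
    (hmaps : MapsTo g (ball 0 1) (ball 0 1)) {z : ℂ} (hz : z ∈ ball 0 1) :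
    (1 - ‖z‖ ^ 2) * ‖deriv g z‖ ≤ 1 - ‖g z‖ ^ 2 := by
  have hz' := mem_ball_zero_iff.mp hz
  have hw := mem_ball_zero_iff.mp (hmaps hz)
  set G := diskMobius (g z) ∘ g ∘ diskMobius z
  have hGd : DifferentiableOn ℂ G (ball 0 1) :=
    (differentiableOn_diskMobius hw).comp (hg.comp (differentiableOn_diskMobius hz')
      (mapsTo_diskMobius hz')) (hmaps.comp (mapsTo_diskMobius hz'))
  have hG0 : G 0 = 0 := by simp [G]
  have hGmaps : MapsTo G (ball 0 1) (closedBall (G 0) 1) := by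
    rw [hG0]
    exact ((mapsTo_diskMobius hw).comp (hmaps.comp (mapsTo_diskMobius hz'))).mono_right
      ball_subset_closedBall
  have hschwarz := Complex.norm_deriv_le_one_of_mapsTo_ball hGd hGmaps one_pos
  have hasDerivAt_deriv : ∀ {f : ℂ → ℂ} {w : ℂ}, DifferentiableOn ℂ f (ball 0 1) →
      w ∈ ball 0 1 → HasDerivAt f (deriv f w) w :=
    fun hf hw => (hf.differentiableAt (isOpen_ball.mem_nhds hw)).hasDerivAt
  have hφz := hasDerivAt_deriv (differentiableOn_diskMobius hz') (mem_ball_self one_pos)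
  have hgz := hasDerivAt_deriv hg (diskMobius_zero (a := z) ▸ hz)
  have hφw :=
    hasDerivAt_deriv (differentiableOn_diskMobius hw) (diskMobius_zero (a := z) ▸ hmaps hz)
  rw [(hφw.comp 0 (hgz.comp 0 hφz)).deriv, diskMobius_zero, norm_mul, norm_mul,
    norm_deriv_diskMobius_zero hz'] at hschwarz
  have hw2 : 0 ≤ 1 - ‖g z‖ ^ 2 := by nlinarith [norm_nonneg (g z)]
  calc (1 - ‖z‖ ^ 2) * ‖deriv g z‖
      = (1 - ‖g z‖ ^ 2) * ‖deriv (diskMobius (g z)) (g z)‖ * (‖deriv g z‖ * (1 - ‖z‖ ^ 2)) := by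
        rw [norm_deriv_diskMobius_self hw]; ring
    _ ≤ (1 - ‖g z‖ ^ 2) * 1 := by
        rw [mul_assoc]; exact mul_le_mul_of_nonneg_left hschwarz hw2
    _ = 1 - ‖g z‖ ^ 2 := mul_one _

theorem schwarz_pick_of_norm_lt {g : ℂ → ℂ} {M : ℝ} (hg : DifferentiableOn ℂ g (ball 0 1))
    (hM : ∀ z ∈ ball (0 : ℂ) 1, ‖g z‖ < M) {z : ℂ} (hz : z ∈ ball 0 1) :
    M * ((1 - ‖z‖ ^ 2) * ‖deriv g z‖) ≤ M ^ 2 - ‖g z‖ ^ 2 := by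
  have hMpos : 0 < M := (norm_nonneg _).trans_lt (hM 0 (mem_ball_self one_pos))
  have hMC : (M : ℂ) ≠ 0 := Complex.ofReal_ne_zero.mpr hMpos.ne'
  have hnorm : ∀ w, ‖g w / M‖ = ‖g w‖ / M := fun w => by
    rw [norm_div, Complex.norm_real, Real.norm_of_nonneg hMpos.le]
  have hmaps : MapsTo (fun w => g w / M) (ball 0 1) (ball 0 1) := fun w hw => by
    rw [mem_ball_zero_iff, hnorm, div_lt_one hMpos]; exact hM w hw
  have := schwarz_pick (hg.div_const (M : ℂ)) hmaps hz
  rw [deriv_div_const, norm_div, Complex.norm_real, Real.norm_of_nonneg hMpos.le, hnorm] at this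
  have key : M * ((1 - ‖z‖ ^ 2) * ‖deriv g z‖) = M ^ 2 * ((1 - ‖z‖ ^ 2) * (‖deriv g z‖ / M)) := by
    field_simp
  rw [key]
  calc M ^ 2 * ((1 - ‖z‖ ^ 2) * (‖deriv g z‖ / M)) ≤ M ^ 2 * (1 - (‖g z‖ / M) ^ 2) :=
        mul_le_mul_of_nonneg_left this (sq_nonneg M)
    _ = M ^ 2 - ‖g z‖ ^ 2 := by field_simp

-- `4 / 5` bounds the maximum `4 / (3 √3)` of `2 t (1 - t ^ 2)` on `[0, 1]`.
theorem mul_one_sub_sq_norm_deriv_mul_self_le {g : ℂ → ℂ} {M : ℝ}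
    (hg : DifferentiableOn ℂ g (ball 0 1)) (hM : ∀ z ∈ ball (0 : ℂ) 1, ‖g z‖ < M) {z : ℂ}
    (hz : z ∈ ball 0 1) :
    (1 - ‖z‖ ^ 2) * ‖deriv (fun w => g w * g w) z‖ ≤ 4 / 5 * M ^ 2 := by
  have hMpos : 0 < M := (norm_nonneg _).trans_lt (hM 0 (mem_ball_self one_pos))
  have hgz : DifferentiableAt ℂ g z := hg.differentiableAt (isOpen_ball.mem_nhds hz)
  have hderiv : ‖deriv (fun w => g w * g w) z‖ = 2 * ‖g z‖ * ‖deriv g z‖ := by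
    rw [deriv_fun_mul hgz hgz, show deriv g z * g z + g z * deriv g z = 2 * g z * deriv g z by ring,
      norm_mul, norm_mul, Complex.norm_ofNat]
  have hsp := schwarz_pick_of_norm_lt hg hM hz
  have ht : 0 ≤ ‖g z‖ := norm_nonneg _
  have hcubic : 2 * ‖g z‖ * (M ^ 2 - ‖g z‖ ^ 2) ≤ 4 / 5 * M ^ 3 := by
    nlinarith [mul_nonneg (sq_nonneg (‖g z‖ - 29 / 50 * M))
      (by positivity : 0 ≤ ‖g z‖ + 29 / 25 * M), mul_nonneg ht (sq_nonneg M), pow_pos hMpos 3]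
  rw [hderiv]
  refine le_of_mul_le_mul_left ?_ hMpos
  calc M * ((1 - ‖z‖ ^ 2) * (2 * ‖g z‖ * ‖deriv g z‖))
      = 2 * ‖g z‖ * (M * ((1 - ‖z‖ ^ 2) * ‖deriv g z‖)) := by ring
    _ ≤ 2 * ‖g z‖ * (M ^ 2 - ‖g z‖ ^ 2) := by gcongr
    _ ≤ M * (4 / 5 * M ^ 2) := by linarith

lemma zero_mem_unitDisk : (0 : ℂ) ∈ unitDisk := mem_ball_self one_pos

lemma norm_le_supNorm {f : ℂ → ℂ} (hf : BddAbove ((fun z => ‖f z‖) '' unitDisk)) {z : ℂ}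
    (hz : z ∈ unitDisk) : ‖f z‖ ≤ supNorm f :=
  le_csSup hf (mem_image_of_mem _ hz)

lemma supNorm_le {f : ℂ → ℂ} {c : ℝ} (h : ∀ z ∈ unitDisk, ‖f z‖ ≤ c) : supNorm f ≤ c :=
  csSup_le (Nonempty.image _ ⟨0, zero_mem_unitDisk⟩) (forall_mem_image.mpr h)

lemma blochSemi_le {g : ℂ → ℂ} {c : ℝ} (h : ∀ z ∈ unitDisk, (1 - ‖z‖ ^ 2) * ‖deriv g z‖ ≤ c) :
    blochSemi g ≤ c :=
  csSup_le (Nonempty.image _ ⟨0, zero_mem_unitDisk⟩) (forall_mem_image.mpr h)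

-- An unbounded supremum is `0` in `ℝ`, so positivity forces the set to be bounded.
lemma le_blochSemi_of_pos {g : ℂ → ℂ} (hg : 0 < blochSemi g) {z : ℂ} (hz : z ∈ unitDisk) :
    (1 - ‖z‖ ^ 2) * ‖deriv g z‖ ≤ blochSemi g := by
  refine le_csSup ?_ (mem_image_of_mem _ hz)
  by_contra hb
  rw [blochSemi, Real.sSup_of_not_bddAbove hb] at hg
  exact lt_irrefl 0 hg

lemma blochSemi_mul_self_le {g : ℂ → ℂ} (hg : DifferentiableOn ℂ g unitDisk)
    (hb : BddAbove ((fun z => ‖g z‖) '' unitDisk)) :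
    blochSemi (fun z => g z * g z) ≤ 4 / 5 * supNorm g ^ 2 := by
  have hlim : Tendsto (fun M : ℝ => 4 / 5 * M ^ 2) (𝓝[>] supNorm g) (𝓝 (4 / 5 * supNorm g ^ 2)) :=
    ((continuous_const.mul (continuous_pow 2)).tendsto _).mono_left nhdsWithin_le_nhds
  refine ge_of_tendsto hlim (eventually_nhdsWithin_of_forall fun M hM => ?_)
  exact blochSemi_le fun z hz => mul_one_sub_sq_norm_deriv_mul_self_le hg
    (fun w hw => (norm_le_supNorm hb hw).trans_lt hM) hz

def IsMultiplierIsometry (ψ : ℂ → ℂ) : Prop :=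
  ∀ f : ℂ → ℂ, DifferentiableOn ℂ f unitDisk → BddAbove ((fun z => ‖f z‖) '' unitDisk) →
    blochNorm (fun z => ψ z * f z) = supNorm f

namespace IsMultiplierIsometry

variable {ψ : ℂ → ℂ}

lemma blochSemi_eq (hiso : IsMultiplierIsometry ψ) (h0 : ψ 0 = 0) {f : ℂ → ℂ}
    (hf : DifferentiableOn ℂ f unitDisk) (hb : BddAbove ((fun z => ‖f z‖) '' unitDisk)) :
    blochSemi (fun z => ψ z * f z) = supNorm f := by
  rw [← hiso f hf hb, blochNorm, h0, zero_mul, norm_zero, zero_add]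

lemma norm_le_one (hiso : IsMultiplierIsometry ψ) (hψ : DifferentiableOn ℂ ψ unitDisk)
    (h0 : ψ 0 = 0) {a : ℂ} (ha : a ∈ unitDisk) : ‖ψ a‖ ≤ 1 := by
  rcases eq_or_ne a 0 with rfl | ha0
  · simp [h0]
  have ha' : ‖a‖ < 1 := mem_ball_zero_iff.mp ha
  have hφ1 : ∀ z ∈ unitDisk, ‖diskMobius a z‖ ≤ 1 :=
    fun z hz => (norm_diskMobius_lt_one ha' (mem_ball_zero_iff.mp hz)).le
  have hφb : BddAbove ((fun z => ‖diskMobius a z‖) '' unitDisk) := ⟨1, forall_mem_image.mpr hφ1⟩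
  have hsemi := hiso.blochSemi_eq h0 (differentiableOn_diskMobius ha') hφb
  have hpos : 0 < blochSemi (fun z => ψ z * diskMobius a z) := by
    rw [hsemi]
    exact (norm_pos_iff.mpr ha0).trans_le (by simpa using norm_le_supNorm hφb zero_mem_unitDisk)
  calc ‖ψ a‖ = (1 - ‖a‖ ^ 2) * ‖deriv (fun z => ψ z * diskMobius a z) a‖ :=
        (mul_one_sub_sq_norm_deriv_mul_diskMobius_self
          (hψ.differentiableAt (isOpen_ball.mem_nhds ha)) ha').symm
    _ ≤ blochSemi (fun z => ψ z * diskMobius a z) := le_blochSemi_of_pos hpos ha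
    _ = supNorm (diskMobius a) := hsemi
    _ ≤ 1 := supNorm_le hφ1

lemma supNorm_pos (hiso : IsMultiplierIsometry ψ) (h0 : ψ 0 = 0)
    (hb : BddAbove ((fun z => ‖ψ z‖) '' unitDisk)) : 0 < supNorm ψ := by
  by_contra! hm
  have hzero : ∀ z ∈ unitDisk, ψ z = 0 :=
    fun z hz => norm_le_zero_iff.mp ((norm_le_supNorm hb hz).trans hm)
  have hone : blochSemi ψ = supNorm (fun _ => (1 : ℂ)) := by
    simpa using hiso.blochSemi_eq h0 (differentiableOn_const 1) ⟨1, by simp [upperBounds]⟩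
  have hsemi : blochSemi ψ ≤ 0 := blochSemi_le fun z hz => by
    rw [(eventuallyEq_of_mem (g := fun _ => (0 : ℂ)) (isOpen_ball.mem_nhds hz) hzero).deriv_eq]
    simp
  have : 1 ≤ supNorm (fun _ => (1 : ℂ)) := by
    simpa using norm_le_supNorm (f := fun _ => (1 : ℂ)) ⟨1, by simp [upperBounds]⟩ zero_mem_unitDisk
  linarith

end IsMultiplierIsometry

theorem stmt_5 (ψ : ℂ → ℂ) (hψ : DifferentiableOn ℂ ψ unitDisk)
    (hiso : ∀ f : ℂ → ℂ, DifferentiableOn ℂ f unitDisk →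
      BddAbove ((fun z => ‖f z‖) '' unitDisk) →
      blochNorm (fun z => ψ z * f z) = supNorm f) :
    ψ 0 ≠ 0 := by
  intro h0
  have hiso : IsMultiplierIsometry ψ := hiso
  have hle : ∀ z ∈ unitDisk, ‖ψ z‖ ≤ 1 := fun z hz => hiso.norm_le_one hψ h0 hz
  have hb : BddAbove ((fun z => ‖ψ z‖) '' unitDisk) := ⟨1, forall_mem_image.mpr hle⟩
  have hm1 : supNorm ψ ≤ 1 := supNorm_le hle
  have hm0 : 0 < supNorm ψ := hiso.supNorm_pos h0 hb
  have hm : supNorm ψ ≤ 4 / 5 * supNorm ψ ^ 2 :=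
    (hiso.blochSemi_eq h0 hψ hb).symm.trans_le (blochSemi_mul_self_le hψ hb)
  nlinarith
end
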